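/- arXiv:2309.16565 — 3 statements merged into one kernel-verified Lean document; each statement's English description precedes it below -/
import Mathlib

section
/- Let G be a graph of order n ≥ 2 and orient each edge of G independently with probability 1/2 in each direction. If ℓ ≥ 5·log₂ n, then the probability that some subgraph of G isomorphic to K_{ℓ,ℓ} is acyclic in the resulting random orientation is less than 1/2. -/
def HasDicycleOn {V : Type*} (r : V → V → Prop) (S : Set V) : Prop :=
  ∃ (m : ℕ) (f : ZMod (m + 1) → V), Function.Injective f ∧
    (∀ i, f i ∈ S) ∧ ∀ i, r (f i) (f (i + 1))

def IsAcyclicOn {V : Type*} (r : V → V → Prop) (S : Set V) : Prop :=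
  ¬ HasDicycleOn r S

/-- The orientation of `G` determined by a family of coin flips `ω`: the edge `{u,v}`
(with `u < v`) is oriented from `u` to `v` iff `ω (u, v) = true`. -/
def coinOrientation {n : ℕ} (G : SimpleGraph (Fin n)) (ω : Fin n × Fin n → Bool)
    (u v : Fin n) : Prop :=
  G.Adj u v ∧ ((u < v ∧ ω (u, v) = true) ∨ (v < u ∧ ω (v, u) = false))

/-- The event that some copy of `K_{ℓ,ℓ}` in `G` is acyclic under the orientation
determined by `ω`. -/
def ExistsAcyclicKll {n : ℕ} (G : SimpleGraph (Fin n)) (ℓ : ℕ)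
    (ω : Fin n × Fin n → Bool) : Prop :=
  ∃ S T : Finset (Fin n), S.card = ℓ ∧ T.card = ℓ ∧ Disjoint S T ∧
    (∀ u ∈ S, ∀ v ∈ T, G.Adj u v) ∧
    IsAcyclicOn (fun x y => coinOrientation G ω x y ∧
      ((x ∈ S ∧ y ∈ T) ∨ (x ∈ T ∧ y ∈ S))) Set.univ

/-!
Take a union bound over the at most `n ^ (2ℓ)` candidate pairs `(S, T)`. For a fixed pair,
an acyclic orientation of the `ℓ²` edges between `S` and `T` is induced by a ranking
`S ∪ T → Fin n` (the number of vertices from which a vertex is reachable), so at most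
`n ^ (2ℓ)` of the `2 ^ (ℓ²)` orientations of these edges are acyclic. The probability is thus
at most `n ^ (4ℓ) / 2 ^ (ℓ²)`, which is less than `1/2` as soon as `n ^ 5 ≤ 2 ^ ℓ`.
-/

open Finset

section Dicycle

variable {V : Type*} {r : V → V → Prop}

theorem hasDicycleOn_univ_of_injOn_closedWalk {m : ℕ} {f : ℕ → V}
    (hinj : Set.InjOn f (Set.Iio (m + 1))) (hstep : ∀ i ≤ m, r (f i) (f (i + 1)))
    (hclosed : f (m + 1) = f 0) : HasDicycleOn r Set.univ := by
  refine ⟨m, fun z => f z.val, fun z₁ z₂ h => ZMod.val_injective _ ?_, fun _ => trivial, ?_⟩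
  · exact hinj (ZMod.val_lt z₁) (ZMod.val_lt z₂) h
  · intro z
    have hz : z.val ≤ m := Nat.le_of_lt_succ (ZMod.val_lt z)
    have hsucc : (z + 1).val = (z.val + 1) % (m + 1) := by
      rw [← ZMod.natCast_zmod_val z, ← Nat.cast_succ, ZMod.val_natCast, ZMod.val_natCast,
        Nat.mod_eq_of_lt (ZMod.val_lt z)]
    show r (f z.val) (f (z + 1).val)
    rcases hz.lt_or_eq with hlt | heq
    · rw [hsucc, Nat.mod_eq_of_lt (by omega)]
      exact hstep _ hz
    · rw [hsucc, heq, Nat.mod_self, ← hclosed]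
      exact hstep _ le_rfl

theorem exists_injOn_closedWalk {m : ℕ} {f : ℕ → V} (hm : 0 < m)
    (hstep : ∀ i < m, r (f i) (f (i + 1))) (hclosed : f m = f 0) :
    ∃ (k : ℕ) (g : ℕ → V), Set.InjOn g (Set.Iio (k + 1)) ∧
      (∀ i ≤ k, r (g i) (g (i + 1))) ∧ g (k + 1) = g 0 := by
  induction m using Nat.strong_induction_on generalizing f with
  | _ m ih =>
    by_cases hinj : Set.InjOn f (Set.Iio m)
    · obtain ⟨k, rfl⟩ : ∃ k, m = k + 1 := Nat.exists_eq_add_one.mpr hm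
      exact ⟨k, f, hinj, fun i hi => hstep i (Nat.lt_succ_of_le hi), hclosed⟩
    · -- a repeated vertex `f i = f j` cuts out the shorter closed walk `f i, …, f j`
      obtain ⟨i, hi, j, hj, hfij, hne⟩ : ∃ i < m, ∃ j < m, f i = f j ∧ i ≠ j := by
        simpa [Set.InjOn] using hinj
      wlog hij : i < j generalizing i j
      · exact this j hj i hi hfij.symm hne.symm (by omega)
      refine ih (j - i) (by omega) (f := fun k => f (i + k)) (by omega) (fun k hk => ?_) ?_
      · simpa only [Nat.add_assoc] using hstep (i + k) (by omega)
      · simp only [Nat.add_zero, Nat.add_sub_cancel' hij.le, hfij]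

theorem exists_closedWalk_of_transGen {a b : V} (h : Relation.TransGen r a b) :
    ∃ (m : ℕ) (f : ℕ → V), 0 < m ∧ f 0 = a ∧ f m = b ∧ ∀ i < m, r (f i) (f (i + 1)) := by
  induction h with
  | @single c hac =>
    refine ⟨1, fun i => if i = 0 then a else c, one_pos, rfl, rfl, fun i hi => ?_⟩
    obtain rfl : i = 0 := by omega
    simpa using hac
  | @tail b c _ hbc ih =>
    obtain ⟨m, f, hm, hf0, hfm, hstep⟩ := ih
    refine ⟨m + 1, fun i => if i ≤ m then f i else c, by omega, by simpa using hf0, by simp,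
      fun i hi => ?_⟩
    rcases (Nat.lt_succ_iff.mp hi).lt_or_eq with hlt | rfl
    · simpa [hlt.le, Nat.succ_le_of_lt hlt] using hstep i hlt
    · simpa [hfm] using hbc

theorem IsAcyclicOn.not_transGen_self (hr : IsAcyclicOn r Set.univ) (a : V) :
    ¬ Relation.TransGen r a a := fun h => by
  obtain ⟨m, f, hm, hf0, hfm, hstep⟩ := exists_closedWalk_of_transGen h
  obtain ⟨k, g, hinj, hgstep, hgclosed⟩ := exists_injOn_closedWalk hm hstep (hfm.trans hf0.symm)
  exact hr (hasDicycleOn_univ_of_injOn_closedWalk hinj hgstep hgclosed)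

end Dicycle

theorem IsAcyclicOn.exists_strictMono_rank {V : Type*} [Fintype V] {r : V → V → Prop}
    (hr : IsAcyclicOn r Set.univ) :
    ∃ h : V → ℕ, (∀ v, h v < Fintype.card V) ∧ ∀ a b, r a b → h a < h b := by
  classical
  refine ⟨fun v => #{u | Relation.TransGen r u v}, fun v => ?_, fun a b hab => ?_⟩
  · exact card_lt_univ_of_notMem (s := {u | Relation.TransGen r u v}) (x := v)
      (by simpa using hr.not_transGen_self v)
  · refine card_lt_card ⟨fun u hu => ?_, fun hsub => ?_⟩
    · simp only [mem_filter, mem_univ, true_and] at hu ⊢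
      exact hu.tail hab
    · have : a ∈ ({u | Relation.TransGen r u a} : Finset V) :=
        hsub (by simpa using Relation.TransGen.single hab)
      exact hr.not_transGen_self a (by simpa using this)

section Bipartite

variable {n : ℕ} {G : SimpleGraph (Fin n)} {ω : Fin n × Fin n → Bool} {S T : Finset (Fin n)}

def bipartiteOrientation (G : SimpleGraph (Fin n)) (ω : Fin n × Fin n → Bool)
    (S T : Finset (Fin n)) (x y : Fin n) : Prop :=
  coinOrientation G ω x y ∧ ((x ∈ S ∧ y ∈ T) ∨ (x ∈ T ∧ y ∈ S))

/-- The coins `ω p` that orient the edges between `S` and `T` (see `coinOrientation`). -/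
def crossingPairs (S T : Finset (Fin n)) : Finset (Fin n × Fin n) :=
  {p | p.1 < p.2 ∧ ((p.1 ∈ S ∧ p.2 ∈ T) ∨ (p.1 ∈ T ∧ p.2 ∈ S))}

theorem card_mul_card_le_card_crossingPairs (hST : Disjoint S T) :
    #S * #T ≤ #(crossingPairs S T) := by
  rw [← card_product]
  refine card_le_card_of_injOn (fun p => if p.1 < p.2 then p else p.swap) ?_ ?_
  · rintro ⟨u, v⟩ huv
    simp only [coe_product, Set.mem_prod, mem_coe] at huv
    have hne : u ≠ v := fun h => disjoint_left.mp hST huv.1 (h ▸ huv.2)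
    rcases hne.lt_or_gt with h | h
    · simp [crossingPairs, h, huv]
    · simp [crossingPairs, h, h.not_gt, huv]
  · refine Set.LeftInvOn.injOn (f₁' := fun q => if q.1 ∈ S then q else q.swap) ?_
    rintro ⟨u, v⟩ huv
    simp only [coe_product, Set.mem_prod, mem_coe] at huv
    have hv : v ∉ S := disjoint_right.mp hST huv.2
    by_cases h : u < v <;> simp [h, huv.1, hv]

theorem fst_mem_union_of_mem_crossingPairs {p : Fin n × Fin n} (hp : p ∈ crossingPairs S T) :
    p.1 ∈ S ∪ T := by
  simp only [crossingPairs, mem_filter, mem_univ, true_and] at hp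
  rw [mem_union]
  tauto

theorem snd_mem_union_of_mem_crossingPairs {p : Fin n × Fin n} (hp : p ∈ crossingPairs S T) :
    p.2 ∈ S ∪ T := by
  simp only [crossingPairs, mem_filter, mem_univ, true_and] at hp
  rw [mem_union]
  tauto

def decodeOrientation (S T : Finset (Fin n)) (h : ↥(S ∪ T) → Fin n)
    (b : ↥(crossingPairs S T)ᶜ → Bool) (p : Fin n × Fin n) : Bool :=
  if hp : p ∈ crossingPairs S T then
    decide (h ⟨p.1, fst_mem_union_of_mem_crossingPairs hp⟩ <
      h ⟨p.2, snd_mem_union_of_mem_crossingPairs hp⟩)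
  else b ⟨p, mem_compl.mpr hp⟩

theorem coin_eq_decide_of_strictMono {α : Type*} [LinearOrder α]
    (hadj : ∀ u ∈ S, ∀ v ∈ T, G.Adj u v) {h : Fin n → α}
    (hh : ∀ a b, bipartiteOrientation G ω S T a b → h a < h b) {p : Fin n × Fin n}
    (hp : p ∈ crossingPairs S T) : ω p = decide (h p.1 < h p.2) := by
  simp only [crossingPairs, mem_filter, mem_univ, true_and] at hp
  obtain ⟨hlt, hcross⟩ := hp
  have hG : G.Adj p.1 p.2 := by
    rcases hcross with ⟨hu, hv⟩ | ⟨hu, hv⟩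
    exacts [hadj _ hu _ hv, (hadj _ hv _ hu).symm]
  cases hω : ω p
  · have := hh p.2 p.1 ⟨⟨hG.symm, Or.inr ⟨hlt, hω⟩⟩, by tauto⟩
    simpa using this.le
  · simpa using hh p.1 p.2 ⟨⟨hG, Or.inl ⟨hlt, hω⟩⟩, hcross⟩

open Classical in
theorem card_acyclic_le (hST : Disjoint S T) (hadj : ∀ u ∈ S, ∀ v ∈ T, G.Adj u v) :
    #{ω | IsAcyclicOn (bipartiteOrientation G ω S T) Set.univ} ≤
      n ^ (#S + #T) * 2 ^ #(crossingPairs S T)ᶜ := by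
  calc #{ω | IsAcyclicOn (bipartiteOrientation G ω S T) Set.univ}
      ≤ #(univ.image fun hb : (↥(S ∪ T) → Fin n) × (↥(crossingPairs S T)ᶜ → Bool) =>
          decodeOrientation S T hb.1 hb.2) := by
        refine card_le_card fun ω hω => ?_
        obtain ⟨h, hlt, hh⟩ := IsAcyclicOn.exists_strictMono_rank (mem_filter.mp hω).2
        let hF : Fin n → Fin n := fun v => ⟨h v, by simpa using hlt v⟩
        refine mem_image.mpr ⟨(fun v => hF v, fun q => ω q), mem_univ _, funext fun p => ?_⟩
        unfold decodeOrientation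
        split_ifs with hp
        · exact (coin_eq_decide_of_strictMono hadj (h := hF) hh hp).symm
        · rfl
    _ ≤ n ^ (#S + #T) * 2 ^ #(crossingPairs S T)ᶜ := by
        refine card_image_le.trans ?_
        simp only [card_univ, Fintype.card_prod, Fintype.card_fun, Fintype.card_coe,
          Fintype.card_fin, Fintype.card_bool, card_union_of_disjoint hST, le_refl]

open Classical in
theorem card_acyclic_mul_le (hST : Disjoint S T) (hadj : ∀ u ∈ S, ∀ v ∈ T, G.Adj u v) :
    #{ω | IsAcyclicOn (bipartiteOrientation G ω S T) Set.univ} * 2 ^ (#S * #T) ≤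
      n ^ (#S + #T) * 2 ^ (n * n) := by
  have hK : n * n = #(crossingPairs S T)ᶜ + #(crossingPairs S T) := by
    rw [card_compl_add_card, Fintype.card_prod, Fintype.card_fin]
  calc _ ≤ n ^ (#S + #T) * 2 ^ #(crossingPairs S T)ᶜ * 2 ^ #(crossingPairs S T) := by
        gcongr
        exacts [card_acyclic_le hST hadj, one_le_two, card_mul_card_le_card_crossingPairs hST]
    _ = n ^ (#S + #T) * 2 ^ (n * n) := by rw [hK, mul_assoc, ← pow_add]

end Bipartite

open Classical in
theorem card_existsAcyclicKll_mul_le {n : ℕ} (G : SimpleGraph (Fin n)) (ℓ : ℕ) :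
    #{ω | ExistsAcyclicKll G ℓ ω} * 2 ^ (ℓ * ℓ) ≤ n ^ (4 * ℓ) * 2 ^ (n * n) := by
  set P := (powersetCard ℓ univ ×ˢ powersetCard ℓ univ).filter fun st : Finset (Fin n) × _ =>
    Disjoint st.1 st.2 ∧ ∀ u ∈ st.1, ∀ v ∈ st.2, G.Adj u v
  set A := fun st : Finset (Fin n) × Finset (Fin n) =>
    ({ω | IsAcyclicOn (bipartiteOrientation G ω st.1 st.2) Set.univ} : Finset _)
  have hcover : ({ω | ExistsAcyclicKll G ℓ ω} : Finset _) ⊆ P.biUnion A := by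
    intro ω hω
    obtain ⟨S, T, hS, hT, hST, hadj, hacyc⟩ := (mem_filter.mp hω).2
    exact mem_biUnion.mpr ⟨(S, T), mem_filter.mpr ⟨by simp [hS, hT], hST, hadj⟩,
      mem_filter.mpr ⟨mem_univ _, hacyc⟩⟩
  have hpair : ∀ st ∈ P, #(A st) * 2 ^ (ℓ * ℓ) ≤ n ^ (2 * ℓ) * 2 ^ (n * n) := by
    rintro ⟨S, T⟩ hst
    simp only [P, mem_filter, mem_product, mem_powersetCard] at hst
    obtain ⟨⟨⟨-, hS⟩, -, hT⟩, hST, hadj⟩ := hst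
    simpa [A, hS, hT, two_mul] using card_acyclic_mul_le hST hadj
  have hP : #P ≤ n ^ ℓ * n ^ ℓ := by
    refine (card_filter_le _ _).trans ?_
    rw [card_product, card_powersetCard, card_univ, Fintype.card_fin]
    exact Nat.mul_le_mul (Nat.choose_le_pow n ℓ) (Nat.choose_le_pow n ℓ)
  calc #{ω | ExistsAcyclicKll G ℓ ω} * 2 ^ (ℓ * ℓ)
      ≤ (∑ st ∈ P, #(A st)) * 2 ^ (ℓ * ℓ) := by
        gcongr
        exact (card_le_card hcover).trans card_biUnion_le
    _ = ∑ st ∈ P, #(A st) * 2 ^ (ℓ * ℓ) := sum_mul _ _ _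
    _ ≤ #P * (n ^ (2 * ℓ) * 2 ^ (n * n)) := sum_le_card_nsmul _ _ _ hpair
    _ ≤ n ^ ℓ * n ^ ℓ * (n ^ (2 * ℓ) * 2 ^ (n * n)) := by gcongr
    _ = n ^ (4 * ℓ) * 2 ^ (n * n) := by ring

theorem pow_le_two_pow_of_mul_logb_le {n k ℓ : ℕ} (hn : 0 < n)
    (h : k * Real.logb 2 n ≤ ℓ) : n ^ k ≤ 2 ^ ℓ := by
  have hlog : Real.logb 2 ((n : ℝ) ^ k) ≤ ℓ := by rwa [Real.logb_pow]
  rw [Real.logb_le_iff_le_rpow one_lt_two (by positivity), Real.rpow_natCast] at hlog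
  exact_mod_cast hlog

theorem two_mul_pow_lt_two_pow_mul_self {n ℓ : ℕ} (hn : 2 ≤ n) (h : n ^ 5 ≤ 2 ^ ℓ) :
    2 * n ^ (4 * ℓ) < 2 ^ (ℓ * ℓ) := by
  have hℓ : 5 ≤ ℓ := (Nat.pow_le_pow_iff_right one_lt_two).mp ((Nat.pow_le_pow_left hn 5).trans h)
  refine lt_of_pow_lt_pow_left₀ 5 (Nat.zero_le _) ?_
  calc (2 * n ^ (4 * ℓ)) ^ 5 = 2 ^ 5 * (n ^ 5) ^ (4 * ℓ) := by ring
    _ ≤ 2 ^ 5 * (2 ^ ℓ) ^ (4 * ℓ) := by gcongr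
    _ = 2 ^ (5 + 4 * (ℓ * ℓ)) := by ring
    _ < 2 ^ (5 * (ℓ * ℓ)) := Nat.pow_lt_pow_right one_lt_two (by nlinarith)
    _ = (2 ^ (ℓ * ℓ)) ^ 5 := by ring

/-- If `ℓ ≥ 5 log₂ n` then, for a uniformly random orientation of a graph `G` of order
`n ≥ 2`, the probability that some subgraph of `G` isomorphic to `K_{ℓ,ℓ}` is acyclic is
less than `1/2`. -/
theorem prob_acyclic_Kll_lt_half (n ℓ : ℕ) (hn : 2 ≤ n) (G : SimpleGraph (Fin n))
    (hℓ : 5 * Real.logb 2 n ≤ ℓ) :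
    (Nat.card {ω : Fin n × Fin n → Bool // ExistsAcyclicKll G ℓ ω} : ℝ) <
      (Nat.card (Fin n × Fin n → Bool) : ℝ) / 2 := by
  classical
  have hn5 : n ^ 5 ≤ 2 ^ ℓ := pow_le_two_pow_of_mul_logb_le (by omega) (by exact_mod_cast hℓ)
  have hlt : #{ω | ExistsAcyclicKll G ℓ ω} * 2 < 2 ^ (n * n) := by
    refine Nat.lt_of_mul_lt_mul_right (a := 2 ^ (ℓ * ℓ)) ?_
    calc #{ω | ExistsAcyclicKll G ℓ ω} * 2 * 2 ^ (ℓ * ℓ)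
        = 2 * (#{ω | ExistsAcyclicKll G ℓ ω} * 2 ^ (ℓ * ℓ)) := by ring
      _ ≤ 2 * n ^ (4 * ℓ) * 2 ^ (n * n) := by
        rw [mul_assoc]
        exact Nat.mul_le_mul_left 2 (card_existsAcyclicKll_mul_le G ℓ)
      _ < 2 ^ (ℓ * ℓ) * 2 ^ (n * n) := by
        gcongr
        exact two_mul_pow_lt_two_pow_mul_self hn hn5
      _ = 2 ^ (n * n) * 2 ^ (ℓ * ℓ) := mul_comm _ _
  rw [Nat.card_eq_fintype_card, Fintype.card_subtype, Nat.card_eq_fintype_card,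
    Fintype.card_fun, Fintype.card_prod, Fintype.card_fin, Fintype.card_bool, lt_div_iff₀ two_pos]
  exact_mod_cast hlt
end

section
/- For digraphs G and H, the dichromatic number of the Cartesian product satisfies χ⃗(G □ H) = max{χ⃗(G), χ⃗(H)}. -/
/-- `f` is a proper dicolouring: every colour class induces an acyclic subdigraph. -/
def IsProperDicoloring {V : Type*} (r : V → V → Prop) {k : ℕ} (f : V → Fin k) : Prop :=
  ∀ c, IsAcyclicOn r {v | f v = c}

def Dicolorable {V : Type*} (r : V → V → Prop) (k : ℕ) : Prop :=
  ∃ f : V → Fin k, IsProperDicoloring r f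

noncomputable def dichromaticNumber {V : Type*} (r : V → V → Prop) : ℕ :=
  sInf {k | Dicolorable r k}

/-- The Cartesian product of two digraphs. -/
def cartesianProduct {VG VH : Type*} (G : VG → VG → Prop) (H : VH → VH → Prop)
    (p q : VG × VH) : Prop :=
  (p.1 = q.1 ∧ H p.2 q.2) ∨ (p.2 = q.2 ∧ G p.1 q.1)

section

open Function Relation

variable {V W : Type*} {r : V → V → Prop} {S : Set V}

lemma ZMod.eq_apply_zero_of_apply_add_one {n : ℕ} {α : Sort*} {p : ZMod (n + 1) → α}
    (h : ∀ i, p (i + 1) = p i) (i : ZMod (n + 1)) : p i = p 0 := by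
  rw [← ZMod.natCast_zmod_val i]
  induction i.val with
  | zero => rw [Nat.cast_zero]
  | succ t ih => rw [Nat.cast_succ, h, ih]

def inducedRel (r : V → V → Prop) (S : Set V) (a b : V) : Prop :=
  a ∈ S ∧ b ∈ S ∧ r a b

lemma exists_walk_of_transGen {a b : V} (h : TransGen r a b) :
    ∃ (n : ℕ) (v : ℕ → V), v 0 = a ∧ v (n + 1) = b ∧ ∀ i ≤ n, r (v i) (v (i + 1)) := by
  induction h using TransGen.head_induction_on with
  | @single a hab =>
    refine ⟨0, fun i => if i = 0 then a else b, rfl, rfl, fun i hi => ?_⟩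
    obtain rfl : i = 0 := by omega
    exact hab
  | @head a c hac _ ih =>
    obtain ⟨n, v, hv0, hvn, hv⟩ := ih
    refine ⟨n + 1, fun i => Nat.casesOn i a v, rfl, hvn, fun i hi => ?_⟩
    cases i with
    | zero => rw [← hv0] at hac; exact hac
    | succ i => exact hv i (by omega)

lemma hasDicycleOn_of_closed_walk (n : ℕ) (v : ℕ → V)
    (hclosed : v (n + 1) = v 0) (hv : ∀ i ≤ n, inducedRel r S (v i) (v (i + 1))) :
    HasDicycleOn r S := by
  induction n using Nat.strong_induction_on generalizing v with
  | _ n ih =>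
  -- A repeated vertex `v i = v j` cuts out the shorter closed walk `v i, …, v j`.
  have shortcut : ∀ i j, i < j → j ≤ n → v i = v j → HasDicycleOn r S := fun i j hij hjn hvij =>
    ih (j - i - 1) (by omega) (fun k => v (i + k))
      (by simpa [show i + (j - i - 1 + 1) = j by omega] using hvij.symm)
      (fun k hk => by simpa [add_assoc] using hv (i + k) (by omega))
  by_cases hinj : ∀ i ≤ n, ∀ j ≤ n, v i = v j → i = j
  · have hwrap : ∀ k ≤ n, v ((k + 1) % (n + 1)) = v (k + 1) := by
      intro k hk
      rcases hk.lt_or_eq with hk | rfl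
      · rw [Nat.mod_eq_of_lt (by omega)]
      · rw [Nat.mod_self, hclosed]
    refine ⟨n, fun i => v i.val, fun i j hij => ZMod.val_injective _ ?_,
      fun i => (hv _ (Nat.lt_succ_iff.mp (ZMod.val_lt i))).1, fun i => ?_⟩
    · exact hinj _ (Nat.lt_succ_iff.mp (ZMod.val_lt i)) _ (Nat.lt_succ_iff.mp (ZMod.val_lt j)) hij
    · have hi := Nat.lt_succ_iff.mp (ZMod.val_lt i)
      have hval : (i + 1).val = (i.val + 1) % (n + 1) := by
        rw [ZMod.val_add, ZMod.val_one_eq_one_mod, Nat.add_mod_mod]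
      show r (v i.val) (v (i + 1).val)
      rw [hval, hwrap _ hi]
      exact (hv _ hi).2.2
  · push Not at hinj
    obtain ⟨i, hi, j, hj, hvij, hne⟩ := hinj
    rcases Nat.lt_or_gt_of_ne hne with h | h
    · exact shortcut i j h hj hvij
    · exact shortcut j i h hi hvij.symm

lemma hasDicycleOn_iff_transGen :
    HasDicycleOn r S ↔ ∃ a, TransGen (inducedRel r S) a a := by
  constructor
  · rintro ⟨m, f, -, hmem, harc⟩
    have hwalk : ∀ k : ℕ, TransGen (inducedRel r S) (f 0) (f ((k + 1 : ℕ) : ZMod (m + 1))) := by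
      intro k
      induction k with
      | zero => simpa using TransGen.single (r := inducedRel r S) ⟨hmem 0, hmem (0 + 1), harc 0⟩
      | succ k ih =>
        refine ih.tail ?_
        rw [Nat.cast_succ (k + 1)]
        exact ⟨hmem _, hmem _, harc _⟩
    exact ⟨f 0, by simpa [ZMod.natCast_self] using hwalk m⟩
  · rintro ⟨a, ha⟩
    obtain ⟨n, v, hv0, hvn, hv⟩ := exists_walk_of_transGen ha
    exact hasDicycleOn_of_closed_walk n v (hvn.trans hv0.symm) hv

lemma isAcyclicOn_iff :
    IsAcyclicOn r S ↔ ∀ a, ¬ TransGen (inducedRel r S) a a := by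
  simp [IsAcyclicOn, hasDicycleOn_iff_transGen]

lemma IsAcyclicOn.of_subsingleton (hr : Irreflexive r)
    (hS : S.Subsingleton) : IsAcyclicOn r S := by
  rintro ⟨m, f, -, hmem, harc⟩
  exact hr (f 0) (hS (hmem (0 + 1)) (hmem 0) ▸ harc 0)

lemma HasDicycleOn.map {s : W → W → Prop} {φ : V → W} (hφ : Injective φ)
    (hom : ∀ a b, r a b → s (φ a) (φ b)) {T : Set W} (h : HasDicycleOn r (φ ⁻¹' T)) :
    HasDicycleOn s T := by
  obtain ⟨m, f, hinj, hmem, harc⟩ := h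
  exact ⟨m, φ ∘ f, hφ.comp hinj, hmem, fun i => hom _ _ (harc i)⟩

section CartesianProduct

variable {G : V → V → Prop} {H : W → W → Prop} {A : Set V} {B : Set W}

lemma Relation.ReflTransGen.fst_of_cartesianProduct {p q : V × W}
    (h : ReflTransGen (inducedRel (cartesianProduct G H) (A ×ˢ B)) p q) :
    ReflTransGen (inducedRel G A) p.1 q.1 := by
  refine ReflTransGen.lift' Prod.fst (fun a b hab => ?_) _ _ h
  obtain ⟨ha, hb, ⟨hab1, -⟩ | ⟨-, hG⟩⟩ := hab
  · rw [onFun, hab1]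
  · exact ReflTransGen.single ⟨ha.1, hb.1, hG⟩

lemma Relation.ReflTransGen.snd_of_cartesianProduct {p q : V × W}
    (h : ReflTransGen (inducedRel (cartesianProduct G H) (A ×ˢ B)) p q) :
    ReflTransGen (inducedRel H B) p.2 q.2 := by
  refine ReflTransGen.lift' Prod.snd (fun a b hab => ?_) _ _ h
  obtain ⟨ha, hb, ⟨-, hH⟩ | ⟨hab2, -⟩⟩ := hab
  · exact ReflTransGen.single ⟨ha.2, hb.2, hH⟩
  · rw [onFun, hab2]

lemma IsAcyclicOn.cartesianProduct (hA : IsAcyclicOn G A) (hB : IsAcyclicOn H B) :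
    IsAcyclicOn (cartesianProduct G H) (A ×ˢ B) := by
  rw [isAcyclicOn_iff] at hA hB ⊢
  intro p hp
  obtain ⟨q, ⟨hp, hq, ⟨-, hH⟩ | ⟨-, hG⟩⟩, hqp⟩ := TransGen.head'_iff.mp hp
  · exact hB p.2 (TransGen.head' ⟨hp.2, hq.2, hH⟩ hqp.snd_of_cartesianProduct)
  · exact hA p.1 (TransGen.head' ⟨hp.1, hq.1, hG⟩ hqp.fst_of_cartesianProduct)

lemma IsProperDicoloring.cartesianProduct {k : ℕ} {g : V → Fin k} {h : W → Fin k}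
    (hg : IsProperDicoloring G g) (hh : IsProperDicoloring H h) :
    IsProperDicoloring (cartesianProduct G H) (fun p => g p.1 + h p.2) := by
  rintro c ⟨m, f, hinj, hmem, harc⟩
  have hstep : ∀ i, g (f (i + 1)).1 = g (f i).1 ∧ h (f (i + 1)).2 = h (f i).2 := by
    intro i
    have hc : g (f i).1 + h (f i).2 = g (f (i + 1)).1 + h (f (i + 1)).2 :=
      (hmem i).trans (hmem (i + 1)).symm
    rcases harc i with ⟨h1, -⟩ | ⟨h2, -⟩
    · rw [h1] at hc
      exact ⟨by rw [h1], (add_left_cancel hc).symm⟩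
    · rw [h2] at hc
      exact ⟨(add_right_cancel hc).symm, by rw [h2]⟩
  refine IsAcyclicOn.cartesianProduct (hg (g (f 0).1)) (hh (h (f 0).2))
    ⟨m, f, hinj, fun i => ⟨?_, ?_⟩, harc⟩
  · exact ZMod.eq_apply_zero_of_apply_add_one (p := fun i => g (f i).1) (fun i => (hstep i).1) i
  · exact ZMod.eq_apply_zero_of_apply_add_one (p := fun i => h (f i).2) (fun i => (hstep i).2) i

end CartesianProduct

section Dicolorable

variable {k : ℕ}

lemma Dicolorable.mono {k' : ℕ} (h : Dicolorable r k) (hk : k ≤ k') : Dicolorable r k' := by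
  obtain ⟨f, hf⟩ := h
  refine ⟨fun v => Fin.castLE hk (f v), ?_⟩
  rintro c ⟨m, g, hinj, hmem, harc⟩
  exact hf (f (g 0))
    ⟨m, g, hinj, fun i => Fin.castLE_injective hk ((hmem i).trans (hmem 0).symm), harc⟩

lemma Dicolorable.of_injective_hom {s : W → W → Prop} {φ : V → W} (hφ : Injective φ)
    (hom : ∀ a b, r a b → s (φ a) (φ b)) (h : Dicolorable s k) : Dicolorable r k := by
  obtain ⟨F, hF⟩ := h
  exact ⟨F ∘ φ, fun c hc => hF c (HasDicycleOn.map (T := {w | F w = c}) hφ hom hc)⟩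

lemma dicolorable_card [Fintype V] (hr : Irreflexive r) : Dicolorable r (Fintype.card V) :=
  ⟨Fintype.equivFin V, fun _ => IsAcyclicOn.of_subsingleton hr
    fun _ hv _ hw => (Fintype.equivFin V).injective (hv.trans hw.symm)⟩

lemma Dicolorable.dichromaticNumber (h : Dicolorable r k) :
    Dicolorable r (dichromaticNumber r) :=
  Nat.sInf_mem (s := {k | Dicolorable r k}) ⟨k, h⟩

lemma dichromaticNumber_le (h : Dicolorable r k) : dichromaticNumber r ≤ k :=
  Nat.sInf_le h

variable {G : V → V → Prop} {H : W → W → Prop}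

lemma Dicolorable.of_cartesianProduct_left [Nonempty W]
    (h : Dicolorable (cartesianProduct G H) k) : Dicolorable G k :=
  h.of_injective_hom (φ := fun u => (u, Classical.arbitrary W)) (Prod.mk_left_injective _)
    fun _ _ hab => Or.inr ⟨rfl, hab⟩

lemma Dicolorable.of_cartesianProduct_right [Nonempty V]
    (h : Dicolorable (cartesianProduct G H) k) : Dicolorable H k :=
  h.of_injective_hom (φ := fun x => (Classical.arbitrary V, x)) (Prod.mk_right_injective _)
    fun _ _ hab => Or.inl ⟨rfl, hab⟩

end Dicolorable

end

/-- Sabidussi's theorem for digraphs: `χ⃗(G □ H) = max {χ⃗(G), χ⃗(H)}`. -/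
theorem dichromaticNumber_cartesianProduct {VG VH : Type*} [Fintype VG] [Fintype VH]
    [Nonempty VG] [Nonempty VH] (G : VG → VG → Prop) (H : VH → VH → Prop)
    (hG : Irreflexive G) (hH : Irreflexive H) :
    dichromaticNumber (cartesianProduct G H) =
      max (dichromaticNumber G) (dichromaticNumber H) := by
  obtain ⟨g, hg⟩ := (dicolorable_card hG).dichromaticNumber.mono
    (le_max_left (dichromaticNumber G) (dichromaticNumber H))
  obtain ⟨h, hh⟩ := (dicolorable_card hH).dichromaticNumber.mono
    (le_max_right (dichromaticNumber G) (dichromaticNumber H))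
  have hP : Dicolorable (cartesianProduct G H) _ := ⟨_, hg.cartesianProduct hh⟩
  refine le_antisymm (dichromaticNumber_le hP) (max_le ?_ ?_)
  · exact dichromaticNumber_le hP.dichromaticNumber.of_cartesianProduct_left
  · exact dichromaticNumber_le hP.dichromaticNumber.of_cartesianProduct_right
end

section
/- For integers 2 ≤ k ≤ n/2, the tensor product of complete graphs K_m × K_m with m = ⌊n/k⌋ is isomorphic to an induced subgraph of the Kneser graph KG(n,k). -/
/-- The vertices of the Kneser graph: `k`-element subsets of `[n]`. -/
def KneserVert (n k : ℕ) := {A : Finset (Fin n) // A.card = k}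

/-- The Kneser graph `KG(n,k)`: two `k`-sets are adjacent iff they are disjoint. -/
def kneserGraph (n k : ℕ) : SimpleGraph (KneserVert n k) where
  Adj A B := A ≠ B ∧ Disjoint A.1 B.1
  symm := ⟨fun _ _ h => ⟨h.1.symm, h.2.symm⟩⟩
  loopless := ⟨fun _ h => h.1 rfl⟩

/-!
Inside a ground set `α ⊕ β × γ`, the vertex `(i, j)` of `K_α × K_β` goes to the block
`{inl i} ∪ ({j} × γ)`: two blocks meet exactly when they share the `α`-point or the `β`-row,
so they are disjoint iff `i ≠ i'` and `j ≠ j'`. With `|γ| = k - 1` the blocks are `k`-sets, and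
for `α = β = Fin ⌊n/k⌋` the ground set has `⌊n/k⌋ · k ≤ n` points, so it embeds into `Fin n`.
-/

open Finset

theorem Finset.disjoint_disjSum_disjSum_iff {α β : Type*} {s s' : Finset α} {t t' : Finset β} :
    Disjoint (s.disjSum t) (s'.disjSum t') ↔ Disjoint s s' ∧ Disjoint t t' := by
  simp only [disjoint_left, Sum.forall, inl_mem_disjSum, inr_mem_disjSum]

theorem kneserGraph_adj_iff_disjoint {n k : ℕ} (hk : 0 < k) {A B : KneserVert n k} :
    (kneserGraph n k).Adj A B ↔ Disjoint A.1 B.1 := by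
  refine ⟨And.right, fun hAB => ⟨?_, hAB⟩⟩
  rintro rfl
  have hA : A.1.Nonempty := card_pos.mp (by rw [A.2]; exact hk)
  exact hA.ne_empty (disjoint_self.mp hAB)

section BlockSet

variable {α β γ : Type*} [Fintype γ]

def blockSet (i : α) (j : β) : Finset (α ⊕ β × γ) :=
  ({i} : Finset α).disjSum ({j} ×ˢ univ)

theorem card_blockSet (i : α) (j : β) :
    #(blockSet (γ := γ) i j) = Fintype.card γ + 1 := by
  simp [blockSet, add_comm]

variable [Nonempty γ]

theorem disjoint_blockSet_iff {i i' : α} {j j' : β} :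
    Disjoint (blockSet (γ := γ) i j) (blockSet i' j') ↔ i ≠ i' ∧ j ≠ j' := by
  simp only [blockSet, disjoint_disjSum_disjSum_iff, disjoint_product, disjoint_singleton,
    disjoint_self, bot_eq_empty, univ_eq_empty_iff, not_isEmpty_of_nonempty, or_false]

theorem blockSet_injective :
    Function.Injective fun p : α × β => (blockSet p.1 p.2 : Finset (α ⊕ β × γ)) := by
  rintro ⟨i, j⟩ ⟨i', j'⟩ h
  obtain ⟨hi, hj⟩ := disjSum_inj.mp h
  obtain ⟨t⟩ := ‹Nonempty γ›
  have hjt : (j', t) ∈ ({j} ×ˢ univ : Finset (β × γ)) := hj ▸ by simp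
  exact Prod.ext (singleton_inj.mp hi) (by simpa using hjt)

end BlockSet

theorem exists_tensor_complete_induced_in_kneser {α β : Type*} [Fintype α] [Fintype β]
    {n k : ℕ} (hk : 2 ≤ k) (hcard : Fintype.card α + Fintype.card β * (k - 1) ≤ n) :
    ∃ ι : α × β → KneserVert n k, Function.Injective ι ∧
      ∀ p q : α × β, (p.1 ≠ q.1 ∧ p.2 ≠ q.2) ↔ (kneserGraph n k).Adj (ι p) (ι q) := by
  have : Nonempty (Fin (k - 1)) := ⟨⟨0, by omega⟩⟩
  obtain ⟨e⟩ : Nonempty (α ⊕ β × Fin (k - 1) ↪ Fin n) :=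
    Function.Embedding.nonempty_of_card_le (by simpa using hcard)
  let ι : α × β → KneserVert n k := fun p =>
    ⟨(blockSet p.1 p.2).map e, by rw [card_map, card_blockSet, Fintype.card_fin]; omega⟩
  refine ⟨ι, fun p q h => blockSet_injective (map_injective e (congrArg Subtype.val h)), ?_⟩
  intro p q
  rw [kneserGraph_adj_iff_disjoint (by omega), disjoint_map, disjoint_blockSet_iff]

theorem tensor_complete_induced_in_kneser_general (n k : ℕ) (h2 : 2 ≤ k) :
    ∃ ι : Fin (n / k) × Fin (n / k) → KneserVert n k, Function.Injective ι ∧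
      ∀ p q : Fin (n / k) × Fin (n / k),
        (p.1 ≠ q.1 ∧ p.2 ≠ q.2) ↔ (kneserGraph n k).Adj (ι p) (ι q) := by
  refine exists_tensor_complete_induced_in_kneser h2 ?_
  calc Fintype.card (Fin (n / k)) + Fintype.card (Fin (n / k)) * (k - 1)
      = n / k * k := by
        rw [Fintype.card_fin, add_comm, ← Nat.mul_add_one, Nat.sub_add_cancel (by omega)]
    _ ≤ n := Nat.div_mul_le_self n k

/-- The tensor product `K_m × K_m` with `m = ⌊n/k⌋` is isomorphic to an induced
subgraph of `KG(n,k)` for `2 ≤ k ≤ n/2`. -/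
theorem tensor_complete_induced_in_kneser (n k : ℕ) (h2 : 2 ≤ k) (hk : 2 * k ≤ n) :
    ∃ ι : Fin (n / k) × Fin (n / k) → KneserVert n k, Function.Injective ι ∧
      ∀ p q : Fin (n / k) × Fin (n / k),
        (p.1 ≠ q.1 ∧ p.2 ≠ q.2) ↔ (kneserGraph n k).Adj (ι p) (ι q) :=
  tensor_complete_induced_in_kneser_general n k h2
end
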